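/- Let (X, d_X) and (Y, d_Y) be compact metric spaces, and equip X × Y with the metric d((x1,y1),(x2,y2)) = max(d_X(x1,x2), d_Y(y1,y2)). Then for every ε > 0, Widim_ε(X × Y) ≤ Widim_ε(X, d_X) + Widim_ε(Y, d_Y). -/

import Mathlib

/-!
If `f : X → P` and `g : Y → Q` are continuous maps into polyhedra of dimensions `a` and `b`
whose fibres have diameter at most `ε`, then `(x, y) ↦ (f x, g y)` is such a map into `P × Q`
for the max metric. After a linear identification `ℝ^m₁ × ℝ^m₂ ≃ ℝ^(m₁ + m₂)`, `P × Q` is the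
union of the hulls `conv (s × t)` of products of simplices; `s × t` spans an affine subspace of
dimension at most `a + b`, so by Carathéodory each such hull is a union of simplices with at most
`a + b + 1` vertices. The infima defining `Widim_ε` are attained because a compact space always
admits such a map: the barycentric map of a partition of unity subordinate to a finite cover by
`ε/2`-balls.
-/

open Metric Filter Set
open scoped ENNReal

noncomputable section

/-- The diameter of a set with respect to an abstract distance function `d`. -/
def setDiam {X : Type*} (d : X → X → ℝ) (s : Set X) : ℝ :=
  sSup (insert 0 {r : ℝ | ∃ x ∈ s, ∃ y ∈ s, d x y = r})

/-- `P ⊆ ℝ^m` is a (finite) polyhedron of dimension at most `n`: a finite union of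
simplices (convex hulls of affinely independent finite sets) each with at most `n+1` vertices. -/
def IsPolyhedronOfDim {m : ℕ} (n : ℕ) (P : Set (EuclideanSpace ℝ (Fin m))) : Prop :=
  ∃ S : Finset (Finset (EuclideanSpace ℝ (Fin m))),
    (∀ s ∈ S, AffineIndependent ℝ (fun v : {x // x ∈ s} => (v : EuclideanSpace ℝ (Fin m))) ∧
      s.card ≤ n + 1) ∧
    P = ⋃ s ∈ S, convexHull ℝ (s : Set (EuclideanSpace ℝ (Fin m)))

/-- `Widim_ε(X, d)`: the minimal integer `n ≥ 0` such that there exist an `n`-dimensional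
polyhedron `P` and a continuous map `f : X → P` all of whose fibers have `d`-diameter `≤ ε`
(an `ε`-embedding). -/
def widim (X : Type*) [TopologicalSpace X] (d : X → X → ℝ) (ε : ℝ) : ℕ :=
  sInf {n : ℕ | ∃ (m : ℕ) (P : Set (EuclideanSpace ℝ (Fin m))) (f : X → P),
    IsPolyhedronOfDim n P ∧ Continuous f ∧ ∀ y : P, setDiam d (f ⁻¹' {y}) ≤ ε}

open Module

local notation "𝔼" m => EuclideanSpace ℝ (Fin m)

section VectorSpan

variable {E F : Type*} [AddCommGroup E] [Module ℝ E] [AddCommGroup F] [Module ℝ F]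

lemma finrank_vectorSpan_add_one_le_card (s : Finset E) (hs : s.Nonempty) :
    finrank ℝ (vectorSpan ℝ (s : Set E)) + 1 ≤ s.card := by
  have : Nonempty s := hs.to_subtype
  have h := finrank_vectorSpan_range_add_one_le ℝ ((↑) : s → E)
  rwa [Subtype.range_coe_subtype, Fintype.card_coe] at h

lemma AffineIndependent.finrank_vectorSpan_finset_add_one {s : Finset E} (hs : s.Nonempty)
    (hi : AffineIndependent ℝ ((↑) : s → E)) :
    finrank ℝ (vectorSpan ℝ (s : Set E)) + 1 = s.card := by
  have : Nonempty s := hs.to_subtype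
  have h := hi.finrank_vectorSpan_add_one
  rwa [Subtype.range_coe_subtype, Fintype.card_coe] at h

variable [FiniteDimensional ℝ E]

lemma finrank_vectorSpan_image_le (f : E →ₗ[ℝ] F) (s : Set E) :
    finrank ℝ (vectorSpan ℝ (f '' s)) ≤ finrank ℝ (vectorSpan ℝ s) := by
  rw [← LinearMap.coe_toAffineMap, ← AffineMap.map_vectorSpan]
  exact Submodule.finrank_map_le _ _

variable [FiniteDimensional ℝ F]

lemma finrank_vectorSpan_prod_le (s : Set E) (t : Set F) :
    finrank ℝ (vectorSpan ℝ (s ×ˢ t)) ≤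
      finrank ℝ (vectorSpan ℝ s) + finrank ℝ (vectorSpan ℝ t) := by
  have hle : vectorSpan ℝ (s ×ˢ t) ≤ (vectorSpan ℝ s).prod (vectorSpan ℝ t) := by
    rw [vectorSpan_def, Submodule.span_le]
    rintro _ ⟨p, hp, q, hq, rfl⟩
    exact ⟨vsub_mem_vectorSpan ℝ hp.1 hq.1, vsub_mem_vectorSpan ℝ hp.2 hq.2⟩
  calc finrank ℝ (vectorSpan ℝ (s ×ˢ t))
      ≤ finrank ℝ ↥((vectorSpan ℝ s).map (LinearMap.inl ℝ E F) ⊔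
          (vectorSpan ℝ t).map (LinearMap.inr ℝ E F)) := by
        rw [← LinearMap.prod_eq_sup_map]
        exact Submodule.finrank_mono hle
    _ ≤ _ := (Submodule.finrank_add_le_finrank_add_finrank _ _).trans
        (add_le_add (Submodule.finrank_map_le _ _) (Submodule.finrank_map_le _ _))

end VectorSpan

lemma LinearMap.image_prod_biUnion_convexHull {E F G : Type*} [AddCommGroup E] [Module ℝ E]
    [AddCommGroup F] [Module ℝ F] [AddCommGroup G] [Module ℝ G] [DecidableEq G]
    (f : E × F →ₗ[ℝ] G) (S : Finset (Finset E)) (T : Finset (Finset F)) :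
    f '' ((⋃ s ∈ S, convexHull ℝ (s : Set E)) ×ˢ ⋃ t ∈ T, convexHull ℝ (t : Set F)) =
      ⋃ w ∈ (S ×ˢ T).image (fun p => (p.1 ×ˢ p.2).image f), convexHull ℝ (w : Set G) := by
  rw [Finset.set_biUnion_finset_image, ← Finset.set_biUnion_coe (S ×ˢ T), Finset.coe_product,
    ← Finset.set_biUnion_coe S, ← Finset.set_biUnion_coe T, ← Set.biUnion_prod,
    Set.image_iUnion₂]
  simp only [Finset.coe_image, Finset.coe_product, ← convexHull_prod, LinearMap.image_convexHull]

open Classical in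
lemma biUnion_convexHull_eq_biUnion_affineIndependent {E : Type*} [AddCommGroup E] [Module ℝ E]
    (S : Finset (Finset E)) :
    ⋃ s ∈ S, convexHull ℝ (s : Set E) =
      ⋃ u ∈ S.biUnion fun s => s.powerset.filter fun u : Finset E =>
          AffineIndependent ℝ ((↑) : u → E),
        convexHull ℝ (u : Set E) := by
  ext x
  simp only [Set.mem_iUnion, Finset.mem_biUnion, Finset.mem_filter, Finset.mem_powerset,
    exists_prop]
  constructor
  · rintro ⟨s, hs, hx⟩
    rw [convexHull_eq_union] at hx
    simp only [Set.mem_iUnion] at hx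
    obtain ⟨t, hts, hi, hx⟩ := hx
    exact ⟨t, ⟨s, hs, Finset.coe_subset.1 hts, hi⟩, hx⟩
  · rintro ⟨u, ⟨s, hs, hus, -⟩, hx⟩
    exact ⟨s, hs, convexHull_mono (Finset.coe_subset.2 hus) hx⟩

section Polyhedron

variable {m n : ℕ}

lemma isPolyhedronOfDim_biUnion_convexHull {S : Finset (Finset (𝔼 m))}
    (hS : ∀ s ∈ S, finrank ℝ (vectorSpan ℝ (s : Set (𝔼 m))) ≤ n) :
    IsPolyhedronOfDim n (⋃ s ∈ S, convexHull ℝ (s : Set (𝔼 m))) := by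
  rw [biUnion_convexHull_eq_biUnion_affineIndependent S]
  refine ⟨_, fun u hu => ?_, rfl⟩
  simp only [Finset.mem_biUnion, Finset.mem_filter, Finset.mem_powerset] at hu
  obtain ⟨s, hs, hus, hi⟩ := hu
  refine ⟨hi, ?_⟩
  rcases u.eq_empty_or_nonempty with rfl | hne
  · simp
  · have := hi.finrank_vectorSpan_finset_add_one hne
    have := Submodule.finrank_mono (vectorSpan_mono ℝ (Finset.coe_subset.2 hus))
    have := hS s hs
    omega

lemma IsPolyhedronOfDim.exists_finrank_vectorSpan_le {P : Set (𝔼 m)}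
    (hP : IsPolyhedronOfDim n P) : ∃ S : Finset (Finset (𝔼 m)),
      (∀ s ∈ S, finrank ℝ (vectorSpan ℝ (s : Set (𝔼 m))) ≤ n) ∧
        P = ⋃ s ∈ S, convexHull ℝ (s : Set (𝔼 m)) := by
  obtain ⟨S, hS, rfl⟩ := hP
  refine ⟨S, fun s hs => ?_, rfl⟩
  rcases s.eq_empty_or_nonempty with rfl | hne
  · rw [Finset.coe_empty, vectorSpan_empty, finrank_bot]
    exact Nat.zero_le n
  · have := finrank_vectorSpan_add_one_le_card s hne
    have := (hS s hs).2
    omega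

lemma isPolyhedronOfDim_convexHull (s : Finset (𝔼 m)) :
    IsPolyhedronOfDim m (convexHull ℝ (s : Set (𝔼 m))) := by
  have h := isPolyhedronOfDim_biUnion_convexHull (S := {s}) (n := m) fun t _ => by
    simpa using Submodule.finrank_le (vectorSpan ℝ (t : Set (𝔼 m)))
  simpa using h

lemma IsPolyhedronOfDim.image_prod {m₁ m₂ a b : ℕ} {P : Set (𝔼 m₁)} {Q : Set (𝔼 m₂)}
    (hP : IsPolyhedronOfDim a P) (hQ : IsPolyhedronOfDim b Q)
    (f : (𝔼 m₁) × (𝔼 m₂) →ₗ[ℝ] 𝔼 m) :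
    IsPolyhedronOfDim (a + b) (f '' (P ×ˢ Q)) := by
  classical
  obtain ⟨S, hS, rfl⟩ := hP.exists_finrank_vectorSpan_le
  obtain ⟨T, hT, rfl⟩ := hQ.exists_finrank_vectorSpan_le
  rw [f.image_prod_biUnion_convexHull S T]
  refine isPolyhedronOfDim_biUnion_convexHull ?_
  simp only [Finset.forall_mem_image, Finset.mem_product, and_imp, Prod.forall]
  intro s t hs ht
  rw [Finset.coe_image, Finset.coe_product]
  exact (finrank_vectorSpan_image_le f _).trans
    ((finrank_vectorSpan_prod_le _ _).trans (add_le_add (hS s hs) (hT t ht)))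

end Polyhedron

def IsEpsEmbedding {X Z : Type*} [PseudoMetricSpace X] (ε : ℝ) (f : X → Z) : Prop :=
  ∀ x x', f x = f x' → dist x x' ≤ ε

section EpsEmbedding

variable {X Y Z W : Type*} [PseudoMetricSpace X] [PseudoMetricSpace Y] {ε : ℝ}

lemma IsEpsEmbedding.comp {f : X → Z} {g : Z → W} (hg : Function.Injective g)
    (hf : IsEpsEmbedding ε f) : IsEpsEmbedding ε (g ∘ f) :=
  fun x x' h => hf x x' (hg h)

lemma IsEpsEmbedding.prodMap {f : X → Z} {g : Y → W} (hf : IsEpsEmbedding ε f)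
    (hg : IsEpsEmbedding ε g) : IsEpsEmbedding ε (Prod.map f g) := fun p q h => by
  rw [Prod.dist_eq]
  exact max_le (hf _ _ (congrArg Prod.fst h)) (hg _ _ (congrArg Prod.snd h))

lemma exists_fin_cover_balls [CompactSpace X] {r : ℝ} (hr : 0 < r) :
    ∃ (k : ℕ) (c : Fin k → X), univ ⊆ ⋃ i, ball (c i) r := by
  obtain ⟨t, -, htf, hcov⟩ := finite_cover_balls_of_compact (isCompact_univ (X := X)) hr
  have := htf.to_subtype
  obtain ⟨k, ⟨e⟩⟩ := Finite.exists_equiv_fin t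
  refine ⟨k, fun i => e.symm i, fun x hx => ?_⟩
  obtain ⟨y, hy, hxy⟩ := mem_iUnion₂.1 (hcov hx)
  exact mem_iUnion.2 ⟨e ⟨y, hy⟩, by simpa using hxy⟩

lemma exists_isEpsEmbedding_of_cover_balls {k : ℕ} (c : Fin k → X)
    (hc : univ ⊆ ⋃ i, ball (c i) (ε / 2)) :
    ∃ f : X → 𝔼 k, Continuous f ∧ IsEpsEmbedding ε f ∧
      range f ⊆ convexHull ℝ (range fun i => EuclideanSpace.single i 1) := by
  obtain ⟨ρ, hρ⟩ :=
    PartitionOfUnity.exists_isSubordinate isClosed_univ _ (fun i => isOpen_ball) hc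
  have hsum (x : X) : ∑ i, ρ i x = 1 := by
    rw [← finsum_eq_sum_of_fintype]
    exact ρ.sum_eq_one (mem_univ x)
  refine ⟨fun x => ∑ i, ρ i x • EuclideanSpace.single i 1, by fun_prop, ?_, ?_⟩
  · intro x x' hxx'
    obtain ⟨i, -, hi⟩ := Finset.exists_ne_zero_of_sum_ne_zero ((hsum x).trans_ne one_ne_zero)
    have hρi : ρ i x = ρ i x' := by
      simpa [Pi.single_apply] using congrArg (· i) hxx'
    have hx := hρ i (subset_tsupport _ hi)
    have hx' := hρ i (subset_tsupport _ (hρi ▸ hi))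
    rw [mem_ball] at hx hx'
    linarith [dist_triangle_right x x' (c i)]
  · rintro _ ⟨x, rfl⟩
    exact (convex_convexHull ℝ _).sum_mem (fun i _ => ρ.nonneg i x) (hsum x)
      (fun i _ => subset_convexHull ℝ _ (mem_range_self i))

end EpsEmbedding

def epsEmbeddingDims (X : Type*) [PseudoMetricSpace X] (ε : ℝ) : Set ℕ :=
  {n | ∃ (m : ℕ) (P : Set (𝔼 m)) (f : X → 𝔼 m),
    IsPolyhedronOfDim n P ∧ Continuous f ∧ range f ⊆ P ∧ IsEpsEmbedding ε f}

section Widim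

variable {X : Type*} {ε : ℝ}

lemma setDiam_le {d : X → X → ℝ} {s : Set X} (hε : 0 ≤ ε)
    (h : ∀ x ∈ s, ∀ y ∈ s, d x y ≤ ε) : setDiam d s ≤ ε := by
  refine csSup_le (insert_nonempty _ _) ?_
  rintro r (rfl | ⟨x, hx, y, hy, rfl⟩)
  exacts [hε, h x hx y hy]

variable [PseudoMetricSpace X]

lemma dist_le_setDiam {s : Set X} (hs : Bornology.IsBounded s) {x y : X} (hx : x ∈ s)
    (hy : y ∈ s) : dist x y ≤ setDiam dist s := by
  obtain ⟨C, hC⟩ := isBounded_iff.1 hs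
  refine le_csSup ⟨max C 0, ?_⟩ (mem_insert_of_mem _ ⟨x, hx, y, hy, rfl⟩)
  rintro r (rfl | ⟨a, ha, b, hb, rfl⟩)
  exacts [le_max_right _ _, (hC ha hb).trans (le_max_left _ _)]

lemma widim_eq_sInf [BoundedSpace X] (hε : 0 ≤ ε) :
    widim X dist ε = sInf (epsEmbeddingDims X ε) := by
  unfold widim epsEmbeddingDims
  congr 1
  ext n
  constructor
  · rintro ⟨m, P, f, hP, hf, hfib⟩
    refine ⟨m, P, (↑) ∘ f, hP, continuous_subtype_val.comp hf, ?_, fun x x' h => ?_⟩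
    · rintro _ ⟨x, rfl⟩
      exact (f x).2
    · exact (dist_le_setDiam (s := f ⁻¹' {f x'}) (Bornology.IsBounded.all _) (Subtype.ext h)
        rfl).trans (hfib (f x'))
  · rintro ⟨m, P, f, hP, hf, hfP, hfib⟩
    refine ⟨m, P, codRestrict f P fun x => hfP ⟨x, rfl⟩, hP, hf.codRestrict _, fun y => ?_⟩
    exact setDiam_le hε fun x hx x' hx' => hfib x x' (congrArg Subtype.val (hx.trans hx'.symm))

lemma widim_mem_epsEmbeddingDims [CompactSpace X] (hε : 0 < ε) :
    widim X dist ε ∈ epsEmbeddingDims X ε := by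
  rw [widim_eq_sInf hε.le]
  refine Nat.sInf_mem ?_
  obtain ⟨k, c, hc⟩ := exists_fin_cover_balls (X := X) (half_pos hε)
  obtain ⟨f, hf, hfε, hfP⟩ := exists_isEpsEmbedding_of_cover_balls c hc
  classical
  refine ⟨k, k, _, f, isPolyhedronOfDim_convexHull (Finset.univ.image fun i =>
    EuclideanSpace.single i 1), hf, ?_, hfε⟩
  simpa using hfP

end Widim

/-- Subadditivity of `Widim_ε` under products with the max metric. -/
theorem stmt1 (X Y : Type*) [MetricSpace X] [MetricSpace Y] [CompactSpace X] [CompactSpace Y]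
    (ε : ℝ) (hε : 0 < ε) :
    widim (X × Y) (fun p q => max (dist p.1 q.1) (dist p.2 q.2)) ε ≤
      widim X dist ε + widim Y dist ε := by
  obtain ⟨m₁, P, f, hP, hf, hfP, hfε⟩ := widim_mem_epsEmbeddingDims (X := X) hε
  obtain ⟨m₂, Q, g, hQ, hg, hgQ, hgε⟩ := widim_mem_epsEmbeddingDims (X := Y) hε
  obtain ⟨e⟩ := FiniteDimensional.nonempty_continuousLinearEquiv_of_finrank_eq (𝕜 := ℝ)
    (E := (𝔼 m₁) × 𝔼 m₂) (F := 𝔼 (m₁ + m₂)) (by simp)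
  have hdist : (fun p q : X × Y => max (dist p.1 q.1) (dist p.2 q.2)) = dist :=
    funext₂ fun _ _ => Prod.dist_eq.symm
  rw [hdist, widim_eq_sInf hε.le]
  refine Nat.sInf_le ⟨_, _, e ∘ Prod.map f g, hP.image_prod hQ (e : _ →ₗ[ℝ] _),
    e.continuous.comp (hf.prodMap hg), ?_, (hfε.prodMap hgε).comp e.injective⟩
  rw [range_comp, range_prodMap]
  exact image_mono (prod_mono hfP hgQ)
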